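/- Under the hypotheses of the discrete-time perturbation theorem (T, E positive trace-preserving on M_d(ℂ), T with unique stationary state, ‖Tⁿ − T^∞‖_{1→1} ≤ K·μⁿ with K ≥ 1, 0 ≤ μ < 1, n̂ = ⌈log(1/K)/log μ⌉): limsup_{n→∞} ‖Tⁿ(ρ₀) − Eⁿ(σ₀)‖₁ ≤ (n̂ + 1/(1−μ))·‖E − T‖_{1→1} for all density matrices ρ₀, σ₀. -/

import Mathlib

open Matrix Filter
open scoped ComplexOrder

/-- Trace norm (Schatten 1-norm) of a complex matrix: `tr √(XᴴX)`. -/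
noncomputable def traceNorm {d : ℕ} (X : Matrix (Fin d) (Fin d) ℂ) : ℝ :=
  ((Matrix.posSemidef_conjTranspose_mul_self X).1.eigenvectorUnitary.1 *
    diagonal (((↑) : ℝ → ℂ) ∘ (√·) ∘ (Matrix.posSemidef_conjTranspose_mul_self X).1.eigenvalues) *
    (star (Matrix.posSemidef_conjTranspose_mul_self X).1.eigenvectorUnitary :
      Matrix (Fin d) (Fin d) ℂ)).trace.re

/-- Linear endomorphisms of `M_d(ℂ)` (superoperators). -/
abbrev MatEnd (d : ℕ) := Module.End ℂ (Matrix (Fin d) (Fin d) ℂ)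

/-- Trace-preserving map. -/
def IsTP {d : ℕ} (T : MatEnd d) : Prop := ∀ X, (T X).trace = X.trace

/-- Positive map: maps PSD matrices to PSD matrices. -/
def IsPos {d : ℕ} (T : MatEnd d) : Prop := ∀ X, X.PosSemidef → (T X).PosSemidef

/-- Hermiticity-preserving map. -/
def IsHP {d : ℕ} (T : MatEnd d) : Prop := ∀ X, (T X)ᴴ = T Xᴴ

/-- Induced 1→1 norm: `sup_{X ≠ 0} ‖T X‖₁ / ‖X‖₁`. -/
noncomputable def norm1to1 {d : ℕ} (T : MatEnd d) : ℝ :=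
  sSup {r | ∃ X, X ≠ 0 ∧ r = traceNorm (T X) / traceNorm X}

/-- Trace-norm contraction coefficient: sup over nonzero Hermitian traceless `σ`. -/
noncomputable def tau {d : ℕ} (T : MatEnd d) : ℝ :=
  sSup {r | ∃ σ : Matrix (Fin d) (Fin d) ℂ,
    σ.IsHermitian ∧ σ.trace = 0 ∧ σ ≠ 0 ∧ r = traceNorm (T σ) / traceNorm σ}

/-- Density matrix: positive semidefinite with unit trace. -/
def IsDensity {d : ℕ} (ρ : Matrix (Fin d) (Fin d) ℂ) : Prop := ρ.PosSemidef ∧ ρ.trace = 1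

/-- `Tinf` is the Cesàro-mean fixed point projection of `T`. -/
def IsCesaroProj {d : ℕ} (T Tinf : MatEnd d) : Prop :=
  ∀ X, Tendsto (fun n : ℕ => (n : ℂ)⁻¹ • ∑ k ∈ Finset.range n, (T ^ (k + 1)) X)
    atTop (nhds (Tinf X))

/-!
Write `Tⁿρ₀ - Eⁿσ₀ = Tⁿ(ρ₀ - σ₀) + ∑_{k<n} T^(n-1-k) (T - E) Eᵏσ₀`. Every term is Hermitian and
traceless, and on such matrices `T^m` shrinks the trace norm both by the factor `1` (positivity and
trace preservation) and by `K μ^m` (because `T^∞` annihilates them). Each `(T - E) Eᵏσ₀` has trace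
norm at most `‖E - T‖_{1→1}`, and `∑_m min 1 (K μ^m) ≤ n̂ + 1/(1 - μ)` since `K μ^n̂ ≤ 1`; the
first term tends to `0`.

On the trace-norm side, `‖X‖₁ = Re tr |X|` with `|X|` from the continuous functional calculus, and
for `P, Q ≥ 0` the key bound `‖P - Q‖₁ ≤ tr P + tr Q` follows from `|P - Q| = S (P - Q)` with
`S = sign (P - Q)`, `-1 ≤ S ≤ 1`, and the positivity of `tr (A B)` for `A, B ≥ 0`.
-/

open scoped MatrixOrder

section TraceNorm
variable {d : ℕ}

lemma Matrix.IsHermitian.re_trace_cfc {A : Matrix (Fin d) (Fin d) ℂ} (hA : A.IsHermitian)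
    (f : ℝ → ℝ) : (cfc f A).trace.re = ∑ i, f (hA.eigenvalues i) := by
  rw [hA.cfc_eq, IsHermitian.cfc, Unitary.conjStarAlgAut_apply, trace_mul_cycle,
    Unitary.coe_star_mul_self, one_mul, trace_diagonal, Complex.re_sum]
  rfl

lemma traceNorm_eq_re_trace_abs (X : Matrix (Fin d) (Fin d) ℂ) :
    traceNorm X = (CFC.abs X).trace.re := by
  rw [CFC.abs, CFC.sqrt_eq_real_sqrt _ (star_mul_self_nonneg X), cfcₙ_eq_cfc,
    star_eq_conjTranspose, (posSemidef_conjTranspose_mul_self X).1.cfc_eq]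
  rfl

lemma traceNorm_nonneg (X : Matrix (Fin d) (Fin d) ℂ) : 0 ≤ traceNorm X := by
  rw [traceNorm_eq_re_trace_abs]
  exact (Complex.nonneg_iff.mp (nonneg_iff_posSemidef.mp (CFC.abs_nonneg X)).trace_nonneg).1

lemma traceNorm_of_nonneg {P : Matrix (Fin d) (Fin d) ℂ} (hP : 0 ≤ P) :
    traceNorm P = P.trace.re := by
  rw [traceNorm_eq_re_trace_abs, CFC.abs_of_nonneg P hP]

lemma traceNorm_zero : traceNorm (0 : Matrix (Fin d) (Fin d) ℂ) = 0 := by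
  simp [traceNorm_of_nonneg le_rfl]

lemma traceNorm_neg (X : Matrix (Fin d) (Fin d) ℂ) : traceNorm (-X) = traceNorm X := by
  rw [traceNorm_eq_re_trace_abs, traceNorm_eq_re_trace_abs, CFC.abs_neg]

lemma traceNorm_eq_re_trace_posPart_add_negPart {X : Matrix (Fin d) (Fin d) ℂ}
    (hX : X.IsHermitian) : traceNorm X = (X⁺).trace.re + (X⁻).trace.re := by
  rw [traceNorm_eq_re_trace_abs, ← CFC.posPart_add_negPart X hX.isSelfAdjoint, trace_add,
    Complex.add_re]

lemma abs_eq_cfc_sign_mul {X : Matrix (Fin d) (Fin d) ℂ} (hX : X.IsHermitian) :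
    CFC.abs X = cfc (fun x : ℝ => (SignType.sign x : ℝ)) X * X := by
  nth_rw 3 [← cfc_id' ℝ X hX.isSelfAdjoint]
  rw [CFC.abs_eq_cfc_norm X hX.isSelfAdjoint,
    ← cfc_mul _ _ X (finite_real_spectrum.continuousOn _) (finite_real_spectrum.continuousOn _)]
  exact cfc_congr fun x _ => (sign_mul_self x).symm

lemma re_trace_mul_nonneg {A B : Matrix (Fin d) (Fin d) ℂ} (hA : 0 ≤ A) (hB : 0 ≤ B) :
    0 ≤ (A * B).trace.re := by
  have hS : (CFC.sqrt A)ᴴ = CFC.sqrt A := (CFC.sqrt_nonneg A).isSelfAdjoint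
  have hpsd : (CFC.sqrt A * B * CFC.sqrt A).PosSemidef := by
    simpa only [hS] using (nonneg_iff_posSemidef.mp hB).conjTranspose_mul_mul_same (CFC.sqrt A)
  rw [← CFC.sqrt_mul_sqrt_self A hA, Matrix.mul_assoc, trace_mul_comm]
  exact (Complex.nonneg_iff.mp hpsd.trace_nonneg).1

lemma re_trace_mul_sub_le {S P Q : Matrix (Fin d) (Fin d) ℂ} (hS₁ : -1 ≤ S) (hS₂ : S ≤ 1)
    (hP : 0 ≤ P) (hQ : 0 ≤ Q) : (S * (P - Q)).trace.re ≤ P.trace.re + Q.trace.re := by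
  have hP' := re_trace_mul_nonneg (sub_nonneg.mpr hS₂) hP
  have hQ' := re_trace_mul_nonneg (neg_le_iff_add_nonneg.mp hS₁) hQ
  simp only [Matrix.sub_mul, Matrix.add_mul, Matrix.mul_sub, Matrix.one_mul, trace_sub,
    trace_add, Complex.sub_re, Complex.add_re] at hP' hQ' ⊢
  linarith

lemma traceNorm_sub_le {P Q : Matrix (Fin d) (Fin d) ℂ} (hP : 0 ≤ P) (hQ : 0 ≤ Q) :
    traceNorm (P - Q) ≤ P.trace.re + Q.trace.re := by
  have hX : (P - Q).IsHermitian := hP.isSelfAdjoint.sub hQ.isSelfAdjoint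
  rw [traceNorm_eq_re_trace_abs, abs_eq_cfc_sign_mul hX]
  refine re_trace_mul_sub_le ?_ ?_ hP hQ
  · simpa using algebraMap_le_cfc _ (-1) (P - Q)
      (fun x _ => by rcases SignType.sign x with _ | _ | _ <;> norm_num)
      (finite_real_spectrum.continuousOn _)
  · exact cfc_le_one _ _ fun x _ => by rcases SignType.sign x with _ | _ | _ <;> norm_num

lemma traceNorm_add_le {A B : Matrix (Fin d) (Fin d) ℂ} (hA : A.IsHermitian)
    (hB : B.IsHermitian) : traceNorm (A + B) ≤ traceNorm A + traceNorm B := by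
  have hAB : A + B = (A⁺ + B⁺) - (A⁻ + B⁻) := by
    nth_rw 1 [← CFC.posPart_sub_negPart A hA.isSelfAdjoint,
      ← CFC.posPart_sub_negPart B hB.isSelfAdjoint]
    abel
  have h := traceNorm_sub_le (add_nonneg (CFC.posPart_nonneg A) (CFC.posPart_nonneg B))
    (add_nonneg (CFC.negPart_nonneg A) (CFC.negPart_nonneg B))
  rw [← hAB, trace_add, trace_add, Complex.add_re, Complex.add_re] at h
  rw [traceNorm_eq_re_trace_posPart_add_negPart hA, traceNorm_eq_re_trace_posPart_add_negPart hB]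
  linarith

lemma traceNorm_sum_le {ι : Type*} {s : Finset ι} {X : ι → Matrix (Fin d) (Fin d) ℂ}
    (hX : ∀ i ∈ s, (X i).IsHermitian) : traceNorm (∑ i ∈ s, X i) ≤ ∑ i ∈ s, traceNorm (X i) :=
  Finset.le_sum_of_subadditive_on_pred _ _ traceNorm_zero.le (fun _ _ => traceNorm_add_le)
    (fun _ _ => IsHermitian.add) _ hX

end TraceNorm

section Frobenius
attribute [local instance] Matrix.frobeniusNormedAddCommGroup Matrix.frobeniusNormedSpace
variable {d : ℕ}

lemma frobenius_norm_sq_eq_re_trace (X : Matrix (Fin d) (Fin d) ℂ) :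
    ‖X‖ ^ 2 = (Xᴴ * X).trace.re := by
  rw [frobenius_norm_def, ← Real.sqrt_eq_rpow, Real.sq_sqrt (by positivity)]
  simp only [trace, diag, mul_apply, conjTranspose_apply, Complex.re_sum]
  rw [Finset.sum_comm]
  refine Finset.sum_congr rfl fun i _ => Finset.sum_congr rfl fun j _ => ?_
  rw [Real.rpow_two, Complex.star_def, Complex.conj_mul', ← Complex.ofReal_pow,
    Complex.ofReal_re]

/-- The eigenvalues of `CFC.abs X` are the singular values of `X`. -/
lemma exists_singularValues (X : Matrix (Fin d) (Fin d) ℂ) :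
    ∃ s : Fin d → ℝ, (∀ i, 0 ≤ s i) ∧ traceNorm X = ∑ i, s i ∧ ‖X‖ ^ 2 = ∑ i, s i ^ 2 := by
  have hS : (CFC.abs X).IsHermitian := (CFC.abs_nonneg X).isSelfAdjoint
  refine ⟨hS.eigenvalues, (nonneg_iff_posSemidef.mp (CFC.abs_nonneg X)).eigenvalues_nonneg,
    ?_, ?_⟩
  · rw [traceNorm_eq_re_trace_abs, ← hS.re_trace_cfc (fun x => x), cfc_id' ℝ _ hS.isSelfAdjoint]
  · rw [frobenius_norm_sq_eq_re_trace, ← star_eq_conjTranspose, ← CFC.abs_mul_abs, ← sq,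
      ← hS.re_trace_cfc (· ^ 2), cfc_pow_id _ _ hS.isSelfAdjoint]

lemma frobenius_norm_le_traceNorm (X : Matrix (Fin d) (Fin d) ℂ) : ‖X‖ ≤ traceNorm X := by
  obtain ⟨s, hs, h1, h2⟩ := exists_singularValues X
  refine le_of_pow_le_pow_left₀ two_ne_zero (traceNorm_nonneg X) ?_
  rw [h1, h2]
  exact Finset.sum_sq_le_sq_sum_of_nonneg fun i _ => hs i

lemma traceNorm_le_sqrt_mul_frobenius_norm (X : Matrix (Fin d) (Fin d) ℂ) :
    traceNorm X ≤ √d * ‖X‖ := by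
  obtain ⟨s, -, h1, h2⟩ := exists_singularValues X
  refine le_of_pow_le_pow_left₀ two_ne_zero (by positivity) ?_
  rw [mul_pow, Real.sq_sqrt (Nat.cast_nonneg d), h1, h2]
  simpa using sq_sum_le_card_mul_sum_sq (s := Finset.univ) (f := s)

lemma traceNorm_pos {X : Matrix (Fin d) (Fin d) ℂ} (hX : X ≠ 0) : 0 < traceNorm X :=
  (norm_pos_iff.mpr hX).trans_le (frobenius_norm_le_traceNorm X)

lemma bddAbove_traceNorm_div (L : MatEnd d) :
    BddAbove {r | ∃ X, X ≠ 0 ∧ r = traceNorm (L X) / traceNorm X} := by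
  obtain ⟨C, hC, hL⟩ :=
    SemilinearMapClass.bound_of_continuous L (LinearMap.continuous_of_finiteDimensional L)
  refine ⟨√d * C, ?_⟩
  rintro _ ⟨X, hX, rfl⟩
  rw [div_le_iff₀ (traceNorm_pos hX)]
  calc traceNorm (L X) ≤ √d * ‖L X‖ := traceNorm_le_sqrt_mul_frobenius_norm _
    _ ≤ √d * (C * traceNorm X) := by
      gcongr
      exact (hL X).trans (by gcongr; exact frobenius_norm_le_traceNorm X)
    _ = √d * C * traceNorm X := by ring

end Frobenius

section OperatorNorm
variable {d : ℕ}

lemma norm1to1_nonneg (L : MatEnd d) : 0 ≤ norm1to1 L :=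
  Real.sSup_nonneg fun _ ⟨_, _, hr⟩ => hr ▸ div_nonneg (traceNorm_nonneg _) (traceNorm_nonneg _)

lemma traceNorm_apply_le (L : MatEnd d) (X : Matrix (Fin d) (Fin d) ℂ) :
    traceNorm (L X) ≤ norm1to1 L * traceNorm X := by
  rcases eq_or_ne X 0 with rfl | hX
  · simp [traceNorm_zero]
  · rw [← div_le_iff₀ (traceNorm_pos hX)]
    exact le_csSup (bddAbove_traceNorm_div L) ⟨X, hX, rfl⟩

end OperatorNorm

section PositiveMaps
variable {d : ℕ} {T E : MatEnd d}

lemma IsPos.pow (hT : IsPos T) (n : ℕ) : IsPos (T ^ n) := by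
  induction n with
  | zero => exact fun X hX => hX
  | succ n ih =>
    intro X hX
    rw [pow_succ', Module.End.mul_apply]
    exact hT _ (ih X hX)

lemma IsTP.pow (hT : IsTP T) (n : ℕ) : IsTP (T ^ n) := by
  induction n with
  | zero => exact fun X => rfl
  | succ n ih => exact fun X => by rw [pow_succ', Module.End.mul_apply, hT, ih]

lemma IsDensity.map {σ : Matrix (Fin d) (Fin d) ℂ} (hσ : IsDensity σ) (hTP : IsTP T)
    (hTPos : IsPos T) : IsDensity (T σ) :=
  ⟨hTPos σ hσ.1, (hTP σ).trans hσ.2⟩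

lemma IsDensity.traceNorm_eq_one {σ : Matrix (Fin d) (Fin d) ℂ} (hσ : IsDensity σ) :
    traceNorm σ = 1 := by
  rw [traceNorm_of_nonneg hσ.1.nonneg, hσ.2, Complex.one_re]

lemma map_posPart_sub_map_negPart (L : MatEnd d) {X : Matrix (Fin d) (Fin d) ℂ}
    (hX : X.IsHermitian) : L X⁺ - L X⁻ = L X := by
  rw [← map_sub, CFC.posPart_sub_negPart X hX.isSelfAdjoint]

lemma IsPos.isHermitian_apply (hT : IsPos T) {X : Matrix (Fin d) (Fin d) ℂ}
    (hX : X.IsHermitian) : (T X).IsHermitian := by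
  rw [← map_posPart_sub_map_negPart T hX]
  exact (hT _ (CFC.posPart_nonneg X).posSemidef).1.sub (hT _ (CFC.negPart_nonneg X).posSemidef).1

lemma IsPos.traceNorm_apply_le (hT : IsPos T) (hTP : IsTP T) {X : Matrix (Fin d) (Fin d) ℂ}
    (hX : X.IsHermitian) : traceNorm (T X) ≤ traceNorm X := by
  rw [← map_posPart_sub_map_negPart T hX, traceNorm_eq_re_trace_posPart_add_negPart hX,
    ← hTP X⁺, ← hTP X⁻]
  exact traceNorm_sub_le (hT _ (CFC.posPart_nonneg X).posSemidef).nonneg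
    (hT _ (CFC.negPart_nonneg X).posSemidef).nonneg

lemma traceNorm_sub_apply_le {σ : Matrix (Fin d) (Fin d) ℂ} (hσ : IsDensity σ) :
    traceNorm ((T - E) σ) ≤ norm1to1 (E - T) := by
  rw [← neg_sub, LinearMap.neg_apply, traceNorm_neg]
  simpa [hσ.traceNorm_eq_one] using traceNorm_apply_le (E - T) σ

end PositiveMaps

lemma pow_sub_pow_eq_sum {R : Type*} [Ring R] (a b : R) (n : ℕ) :
    a ^ n - b ^ n = ∑ k ∈ Finset.range n, a ^ (n - 1 - k) * (a - b) * b ^ k := by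
  induction n with
  | zero => simp
  | succ n ih =>
    have hpow : ∀ k ∈ Finset.range n, a * a ^ (n - 1 - k) = a ^ (n - k) := fun k hk => by
      rw [← pow_succ']
      congr 1
      have := Finset.mem_range.mp hk
      omega
    calc a ^ (n + 1) - b ^ (n + 1) = a * (a ^ n - b ^ n) + (a - b) * b ^ n := by
          rw [pow_succ', pow_succ' b]
          noncomm_ring
      _ = _ := by
        rw [ih, Finset.mul_sum, Finset.sum_range_succ, Nat.add_sub_cancel, Nat.sub_self, pow_zero,
          one_mul]
        congr 1
        refine Finset.sum_congr rfl fun k hk => ?_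
        rw [← mul_assoc, ← mul_assoc, hpow k hk]

section Scalar
variable {K μ : ℝ}

lemma min_one_mul_pow_add_le (hμ0 : 0 ≤ μ) {N : ℕ} (hN : K * μ ^ (N + 1) ≤ μ) (j : ℕ) :
    min 1 (K * μ ^ (N + j)) ≤ μ ^ j := by
  cases j with
  | zero => simp
  | succ j =>
    calc min 1 (K * μ ^ (N + (j + 1))) ≤ K * μ ^ (N + 1) * μ ^ j := by
          rw [mul_assoc, ← pow_add, Nat.add_right_comm]
          exact min_le_right _ _
      _ ≤ μ * μ ^ j := by gcongr
      _ = μ ^ (j + 1) := (pow_succ' μ j).symm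

lemma sum_range_min_one_mul_pow_le (hK : 0 ≤ K) (hμ0 : 0 ≤ μ) (hμ1 : μ < 1) {N : ℕ}
    (hN : K * μ ^ (N + 1) ≤ μ) (n : ℕ) :
    ∑ m ∈ Finset.range n, min 1 (K * μ ^ m) ≤ N + 1 / (1 - μ) := by
  have hnonneg : ∀ m : ℕ, 0 ≤ min 1 (K * μ ^ m) := fun m => le_min zero_le_one (by positivity)
  calc ∑ m ∈ Finset.range n, min 1 (K * μ ^ m)
      ≤ ∑ m ∈ Finset.range (N + n), min 1 (K * μ ^ m) :=
        Finset.sum_le_sum_of_subset_of_nonneg (Finset.range_subset_range.mpr (by omega))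
          fun m _ _ => hnonneg m
    _ = ∑ m ∈ Finset.range N, min 1 (K * μ ^ m) + ∑ j ∈ Finset.range n, min 1 (K * μ ^ (N + j)) :=
        Finset.sum_range_add _ N n
    _ ≤ ∑ m ∈ Finset.range N, 1 + ∑ j ∈ Finset.range n, μ ^ j := by
        gcongr with m _ j
        · exact min_le_left _ _
        · exact min_one_mul_pow_add_le hμ0 hN j
    _ ≤ N + 1 / (1 - μ) := by
        simpa [← Finset.range_eq_Ico] using geom_sum_Ico_le_of_lt_one (m := 0) (n := n) hμ0 hμ1

/-- Stated with the exponent `n̂ + 1` so that it also covers `μ = 0`, where `Real.log 0 = 0` makes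
`n̂ = 0` and `K μ^n̂ = K` may exceed `1`. -/
lemma mul_pow_ceil_log_div_log_succ_le (hK : 1 ≤ K) (hμ0 : 0 ≤ μ) (hμ1 : μ < 1) :
    K * μ ^ (⌈Real.log (1 / K) / Real.log μ⌉₊ + 1) ≤ μ := by
  set N := ⌈Real.log (1 / K) / Real.log μ⌉₊
  rcases hμ0.eq_or_lt with rfl | hμ
  · simp
  have hlog : N * Real.log μ ≤ Real.log (1 / K) :=
    (div_le_iff_of_neg (Real.log_neg hμ hμ1)).mp (Nat.le_ceil _)
  have hpow : μ ^ N ≤ 1 / K := by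
    rwa [← Real.log_pow, Real.log_le_log_iff (by positivity) (by positivity)] at hlog
  calc K * μ ^ (N + 1) = K * μ ^ N * μ := by ring
    _ ≤ 1 * μ := by
        gcongr
        rwa [le_div_iff₀ (by positivity), mul_comm] at hpow
    _ = μ := one_mul μ

end Scalar

lemma limsup_le_of_le_of_tendsto {f g : ℕ → ℝ} {b : ℝ} (hf : ∀ n, 0 ≤ f n) (hfg : ∀ n, f n ≤ g n)
    (hg : Tendsto g atTop (nhds b)) : limsup f atTop ≤ b :=
  hg.limsup_eq ▸ limsup_le_limsup (.of_forall hfg)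
    (isBoundedUnder_of ⟨0, hf⟩).isCoboundedUnder_le hg.isBoundedUnder_le

section Perturbation
variable {d : ℕ} {T E Tinf : MatEnd d} {K μ : ℝ}

lemma IsDensity.traceNorm_sub_le_two {ρ₀ σ₀ : Matrix (Fin d) (Fin d) ℂ} (hρ₀ : IsDensity ρ₀)
    (hσ₀ : IsDensity σ₀) : traceNorm (ρ₀ - σ₀) ≤ 2 := by
  have h := traceNorm_sub_le hρ₀.1.nonneg hσ₀.1.nonneg
  rw [hρ₀.2, hσ₀.2, Complex.one_re] at h
  linarith

lemma trace_sub_apply_eq_zero (hTTP : IsTP T) (hETP : IsTP E) (X : Matrix (Fin d) (Fin d) ℂ) :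
    ((T - E) X).trace = 0 := by
  rw [LinearMap.sub_apply, trace_sub, hTTP, hETP, sub_self]

lemma isHermitian_sub_apply (hTPos : IsPos T) (hEPos : IsPos E) {σ : Matrix (Fin d) (Fin d) ℂ}
    (hσ : σ.PosSemidef) : ((T - E) σ).IsHermitian :=
  (hTPos σ hσ).1.sub (hEPos σ hσ).1

lemma traceNorm_pow_apply_le_min (hTTP : IsTP T) (hTPos : IsPos T) {m : ℕ}
    (hm : norm1to1 (T ^ m - Tinf) ≤ K * μ ^ m) {Z : Matrix (Fin d) (Fin d) ℂ}
    (hZ : Z.IsHermitian) (hTinfZ : Tinf Z = 0) :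
    traceNorm ((T ^ m) Z) ≤ min 1 (K * μ ^ m) * traceNorm Z := by
  rw [min_mul_of_nonneg _ _ (traceNorm_nonneg Z), one_mul]
  refine le_min ((hTPos.pow m).traceNorm_apply_le (hTTP.pow m) hZ) ?_
  calc traceNorm ((T ^ m) Z) = traceNorm ((T ^ m - Tinf) Z) := by
        rw [LinearMap.sub_apply, hTinfZ, sub_zero]
    _ ≤ norm1to1 (T ^ m - Tinf) * traceNorm Z := traceNorm_apply_le _ Z
    _ ≤ K * μ ^ m * traceNorm Z := mul_le_mul_of_nonneg_right hm (traceNorm_nonneg Z)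

lemma pow_apply_sub_pow_apply_eq (ρ₀ σ₀ : Matrix (Fin d) (Fin d) ℂ) (n : ℕ) :
    (T ^ n) ρ₀ - (E ^ n) σ₀ =
      (T ^ n) (ρ₀ - σ₀) + ∑ k ∈ Finset.range n, (T ^ (n - 1 - k)) ((T - E) ((E ^ k) σ₀)) := by
  rw [map_sub, ← sub_add_sub_cancel _ ((T ^ n) σ₀), ← LinearMap.sub_apply,
    pow_sub_pow_eq_sum, LinearMap.sum_apply]
  simp only [Module.End.mul_apply]

theorem traceNorm_pow_apply_sub_pow_apply_le {ρ : Matrix (Fin d) (Fin d) ℂ}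
    (hTTP : IsTP T) (hTPos : IsPos T) (hETP : IsTP E) (hEPos : IsPos E)
    (hTinf : ∀ X, Tinf X = X.trace • ρ) (hK : 0 ≤ K) (hμ0 : 0 ≤ μ)
    (hconv : ∀ n : ℕ, norm1to1 (T ^ n - Tinf) ≤ K * μ ^ n)
    {ρ₀ σ₀ : Matrix (Fin d) (Fin d) ℂ} (hρ₀ : IsDensity ρ₀) (hσ₀ : IsDensity σ₀) (n : ℕ) :
    traceNorm ((T ^ n) ρ₀ - (E ^ n) σ₀) ≤
      2 * (K * μ ^ n) + (∑ m ∈ Finset.range n, min 1 (K * μ ^ m)) * norm1to1 (E - T) := by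
  have hTinf0 : ∀ Z, Z.trace = 0 → Tinf Z = 0 := fun Z hZ => by rw [hTinf, hZ, zero_smul]
  have hσ : ∀ k, IsDensity ((E ^ k) σ₀) := fun k => hσ₀.map (hETP.pow k) (hEPos.pow k)
  have hg : ∀ k, ((T - E) ((E ^ k) σ₀)).IsHermitian := fun k =>
    isHermitian_sub_apply hTPos hEPos (hσ k).1
  have hΔ : (ρ₀ - σ₀).IsHermitian := hρ₀.1.1.sub hσ₀.1.1
  have hΔ0 : (ρ₀ - σ₀).trace = 0 := by rw [trace_sub, hρ₀.2, hσ₀.2, sub_self]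
  have hTg : ∀ m k : ℕ, ((T ^ m) ((T - E) ((E ^ k) σ₀))).IsHermitian := fun m k =>
    (hTPos.pow m).isHermitian_apply (hg k)
  have hfirst : traceNorm ((T ^ n) (ρ₀ - σ₀)) ≤ 2 * (K * μ ^ n) :=
    calc traceNorm ((T ^ n) (ρ₀ - σ₀)) ≤ min 1 (K * μ ^ n) * traceNorm (ρ₀ - σ₀) :=
          traceNorm_pow_apply_le_min hTTP hTPos (hconv n) hΔ (hTinf0 _ hΔ0)
      _ ≤ K * μ ^ n * 2 := mul_le_mul (min_le_right _ _) (hρ₀.traceNorm_sub_le_two hσ₀)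
          (traceNorm_nonneg _) (by positivity)
      _ = 2 * (K * μ ^ n) := mul_comm _ _
  have hterm : ∀ m k : ℕ, traceNorm ((T ^ m) ((T - E) ((E ^ k) σ₀))) ≤
      min 1 (K * μ ^ m) * norm1to1 (E - T) := fun m k =>
    calc traceNorm ((T ^ m) ((T - E) ((E ^ k) σ₀)))
        ≤ min 1 (K * μ ^ m) * traceNorm ((T - E) ((E ^ k) σ₀)) :=
          traceNorm_pow_apply_le_min hTTP hTPos (hconv m) (hg k)
            (hTinf0 _ (trace_sub_apply_eq_zero hTTP hETP _))
      _ ≤ min 1 (K * μ ^ m) * norm1to1 (E - T) :=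
          mul_le_mul_of_nonneg_left (traceNorm_sub_apply_le (hσ k))
            (le_min zero_le_one (by positivity))
  have hsum : (∑ k ∈ Finset.range n, (T ^ (n - 1 - k)) ((T - E) ((E ^ k) σ₀))).IsHermitian :=
    isSelfAdjoint_sum _ fun k _ => hTg _ k
  rw [pow_apply_sub_pow_apply_eq, Finset.sum_mul,
    ← Finset.sum_range_reflect (fun m => min 1 (K * μ ^ m) * norm1to1 (E - T))]
  calc _ ≤ traceNorm ((T ^ n) (ρ₀ - σ₀)) +
        traceNorm (∑ k ∈ Finset.range n, (T ^ (n - 1 - k)) ((T - E) ((E ^ k) σ₀))) :=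
        traceNorm_add_le ((hTPos.pow n).isHermitian_apply hΔ) hsum
    _ ≤ traceNorm ((T ^ n) (ρ₀ - σ₀)) +
        ∑ k ∈ Finset.range n, traceNorm ((T ^ (n - 1 - k)) ((T - E) ((E ^ k) σ₀))) := by
        gcongr
        exact traceNorm_sum_le fun k _ => hTg _ k
    _ ≤ _ := add_le_add hfirst (Finset.sum_le_sum fun k _ => hterm _ k)

end Perturbation

theorem asymptotic_perturbation_general {d : ℕ} (T E Tinf : MatEnd d)
    (hTTP : IsTP T) (hTPos : IsPos T) (hETP : IsTP E) (hEPos : IsPos E)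
    (ρ : Matrix (Fin d) (Fin d) ℂ)
    (hTinf : ∀ X, Tinf X = X.trace • ρ)
    (K μ : ℝ) (hK : 1 ≤ K) (hμ0 : 0 ≤ μ) (hμ1 : μ < 1)
    (hconv : ∀ n : ℕ, norm1to1 (T ^ n - Tinf) ≤ K * μ ^ n)
    (ρ₀ σ₀ : Matrix (Fin d) (Fin d) ℂ) (hρ₀ : IsDensity ρ₀) (hσ₀ : IsDensity σ₀) :
    Filter.limsup (fun n : ℕ => traceNorm ((T ^ n) ρ₀ - (E ^ n) σ₀)) Filter.atTop ≤
      ((⌈Real.log (1 / K) / Real.log μ⌉₊ : ℝ) + 1 / (1 - μ)) * norm1to1 (E - T) := by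
  set B := ((⌈Real.log (1 / K) / Real.log μ⌉₊ : ℝ) + 1 / (1 - μ)) * norm1to1 (E - T)
  have hK0 : 0 ≤ K := zero_le_one.trans hK
  have hbound (n : ℕ) : traceNorm ((T ^ n) ρ₀ - (E ^ n) σ₀) ≤ 2 * (K * μ ^ n) + B := by
    refine (traceNorm_pow_apply_sub_pow_apply_le hTTP hTPos hETP hEPos hTinf hK0 hμ0 hconv
      hρ₀ hσ₀ n).trans ?_
    have hN := mul_pow_ceil_log_div_log_succ_le hK hμ0 hμ1
    exact add_le_add le_rfl (mul_le_mul_of_nonneg_right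
      (sum_range_min_one_mul_pow_le hK0 hμ0 hμ1 hN n) (norm1to1_nonneg _))
  have hlim : Tendsto (fun n : ℕ => 2 * (K * μ ^ n) + B) atTop (nhds B) := by
    simpa using
      (((tendsto_pow_atTop_nhds_zero_of_lt_one hμ0 hμ1).const_mul K).const_mul 2).add_const B
  exact limsup_le_of_le_of_tendsto (fun n => traceNorm_nonneg _) hbound hlim

/-- asymptotic perturbation bound (limsup version). -/
theorem asymptotic_perturbation {d : ℕ} (T E Tinf : MatEnd d)
    (hTTP : IsTP T) (hTPos : IsPos T) (hETP : IsTP E) (hEPos : IsPos E)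
    (ρ : Matrix (Fin d) (Fin d) ℂ) (hρ : IsDensity ρ) (hfix : T ρ = ρ)
    (huniq : ∀ ρ' : Matrix (Fin d) (Fin d) ℂ, IsDensity ρ' → T ρ' = ρ' → ρ' = ρ)
    (hTinf : ∀ X, Tinf X = X.trace • ρ)
    (K μ : ℝ) (hK : 1 ≤ K) (hμ0 : 0 ≤ μ) (hμ1 : μ < 1)
    (hconv : ∀ n : ℕ, norm1to1 (T ^ n - Tinf) ≤ K * μ ^ n)
    (ρ₀ σ₀ : Matrix (Fin d) (Fin d) ℂ) (hρ₀ : IsDensity ρ₀) (hσ₀ : IsDensity σ₀) :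
    Filter.limsup (fun n : ℕ => traceNorm ((T ^ n) ρ₀ - (E ^ n) σ₀)) Filter.atTop ≤
      ((⌈Real.log (1 / K) / Real.log μ⌉₊ : ℝ) + 1 / (1 - μ)) * norm1to1 (E - T) :=
  asymptotic_perturbation_general T E Tinf hTTP hTPos hETP hEPos ρ hTinf K μ hK hμ0 hμ1 hconv ρ₀ σ₀
    hρ₀ hσ₀
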